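/- Let γ ∈ ℝ with γ ≠ 0 and |γ| ≠ 1, and let s < 1/2. Then the estimate ‖B_γ(f,g;s)‖_{L²(ℝ×ℤ)} ≤ C ‖f‖_{L²(ℝ×ℤ)} ‖g‖_{L²(ℝ×ℤ)} fails: for every constant C > 0 there exist nonnegative functions f, g ∈ L²(ℝ×ℤ) with ‖B_γ(f,g;s)‖_{L²(ℝ×ℤ)} > C ‖f‖_{L²(ℝ×ℤ)} ‖g‖_{L²(ℝ×ℤ)}. -/

import Mathlib

open MeasureTheory ENNReal

set_option maxHeartbeats 1000000

/-- Japanese bracket `⟨x⟩ = 1 + |x|`. -/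
noncomputable def jb (x : ℝ) : ℝ := 1 + |x|

lemma jb_def (x : ℝ) : jb x = 1 + |x| := rfl

lemma jb_pos (x : ℝ) : 0 < jb x := by
  have := abs_nonneg x; simp only [jb]; linarith

lemma jb_one_le (x : ℝ) : 1 ≤ jb x := by
  have := abs_nonneg x; simp [jb]

lemma rpow_half_le {x c : ℝ} (hx : 0 ≤ x) (hc : 0 ≤ c) (h : x ≤ c^2) : x ^ (1/2:ℝ) ≤ c := by
  rw [← Real.sqrt_eq_rpow]
  calc Real.sqrt x ≤ Real.sqrt (c^2) := Real.sqrt_le_sqrt h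
  _ = c := Real.sqrt_sq hc

lemma jb_half_le_two {x : ℝ} (h0 : 0 ≤ x) (h1 : x ≤ 1) : jb x ^ (1/2:ℝ) ≤ 2 := by
  apply rpow_half_le (jb_pos x).le (by norm_num)
  rw [jb, abs_of_nonneg h0]; linarith

lemma rpow_min_le {c d x t : ℝ} (hc : 0 < c) (hcx : c ≤ x) (hxd : x ≤ d) :
    min (c ^ t) (d ^ t) ≤ x ^ t := by
  rcases le_or_gt 0 t with ht | ht
  · exact (min_le_left _ _).trans (Real.rpow_le_rpow hc.le hcx ht)
  · exact (min_le_right _ _).trans (Real.rpow_le_rpow_of_nonpos (hc.trans_le hcx) hxd ht.le)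

/-- The `L²(ℝ×ℤ)` norm (valued in `ℝ≥0∞`) of a nonnegative function,
with respect to the product of Lebesgue measure on `ℝ` and counting measure on `ℤ`. -/
noncomputable def l2RZ (f : ℝ × ℤ → ℝ) : ℝ≥0∞ :=
  (∑' n : ℤ, ∫⁻ τ : ℝ, ENNReal.ofReal (f (τ, n)) ^ 2) ^ (1/2 : ℝ)

lemma l2_ind (A : ℝ) (N : ℤ) :
    l2RZ ((Set.Icc A (A+1) ×ˢ ({N} : Set ℤ)).indicator (fun _ => (1:ℝ))) = 1 := by
  rw [l2RZ]
  have key : ∑' n : ℤ, (∫⁻ τ : ℝ, ENNReal.ofReal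
      (((Set.Icc A (A+1) ×ˢ ({N} : Set ℤ)).indicator (fun _ => (1:ℝ))) (τ, n)) ^ 2) = 1 := by
    rw [tsum_eq_single N]
    · have : ∀ τ : ℝ, ENNReal.ofReal
          (((Set.Icc A (A+1) ×ˢ ({N} : Set ℤ)).indicator (fun _ => (1:ℝ))) (τ, N)) ^ 2
          = (Set.Icc A (A+1)).indicator (fun _ => (1:ℝ≥0∞)) τ := by
        intro τ
        by_cases hτ : τ ∈ Set.Icc A (A+1)
        · rw [Set.indicator_of_mem (by simpa [Set.mem_prod] using hτ : (τ, N) ∈ _),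
            Set.indicator_of_mem hτ]
          simp
        · rw [Set.indicator_of_notMem (by simpa [Set.mem_prod] using hτ : (τ, N) ∉ _),
            Set.indicator_of_notMem hτ]
          simp
      rw [lintegral_congr this, lintegral_indicator measurableSet_Icc]
      simp [Real.volume_Icc]
    · intro n hn
      have : ∀ τ : ℝ, ENNReal.ofReal
          (((Set.Icc A (A+1) ×ˢ ({N} : Set ℤ)).indicator (fun _ => (1:ℝ))) (τ, n)) ^ 2 = 0 := by
        intro τ
        rw [Set.indicator_of_notMem (fun h => hn (by simpa using h.2))]
        simp
      rw [lintegral_congr this]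
      simp
  rw [key, ENNReal.one_rpow]

lemma exists_good_approx (α : ℝ) (M : ℕ) :
    ∃ (N : ℕ) (p : ℤ), M ≤ N ∧ 1 ≤ N ∧ |(N:ℝ)*α - p| ≤ 1/N := by
  by_cases h : Irrational α
  · have hinf := Real.infinite_rat_abs_sub_lt_one_div_den_sq_of_irrational h
    obtain ⟨q, hq, hden⟩ : ∃ q ∈ {q : ℚ | |α - (q:ℝ)| < 1 / (q.den : ℝ)^2}, M + 1 ≤ q.den := by
      by_contra hcon
      push_neg at hcon
      apply hinf
      have hsub : {q : ℚ | |α - (q:ℝ)| < 1 / (q.den : ℝ)^2} ⊆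
          (fun x : ℤ × ℕ => ((x.1 : ℚ) / (x.2 : ℚ))) ''
            (Set.Icc (-(⌈(|α|+1)*(M+1)⌉)) (⌈(|α|+1)*(M+1)⌉) ×ˢ Set.Icc 1 M) := by
        intro q hq
        have hd : q.den ≤ M := Nat.lt_succ_iff.mp (hcon q hq)
        have hd1 : (1:ℝ) ≤ (q.den : ℝ) := by exact_mod_cast q.pos
        have hqabs : |(q:ℝ)| ≤ |α| + 1 := by
          have h1 : |α - (q:ℝ)| < 1 := lt_of_lt_of_le hq (by
            rw [div_le_one (by positivity)]
            nlinarith)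
          have := abs_sub_abs_le_abs_sub (q:ℝ) α
          rw [abs_sub_comm] at this
          linarith [this, le_of_lt h1]
        have hnum : |q.num| ≤ ⌈(|α|+1)*(M+1)⌉ := by
          have hcast : (|q.num| : ℝ) = |(q:ℝ)| * q.den := by
            rw [Rat.cast_def]
            rw [abs_div]
            field_simp
            rw [Nat.abs_cast]
          have : (|q.num| : ℝ) ≤ (|α|+1)*(M+1) := by
            rw [hcast]
            have hdM : (q.den : ℝ) ≤ (M:ℝ) + 1 := by
              exact_mod_cast Nat.le_succ_of_le hd
            have h0 : (0:ℝ) ≤ |α| + 1 := by positivity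
            calc |(q:ℝ)| * q.den ≤ (|α|+1) * ((M:ℝ)+1) :=
              mul_le_mul hqabs hdM (by positivity) h0
            _ = (|α|+1)*(M+1) := by push_cast; ring
          exact_mod_cast this.trans (Int.le_ceil _)
        exact ⟨(q.num, q.den), ⟨by simpa [abs_le] using hnum, q.pos, hd⟩, by
          simp [Rat.num_div_den]⟩
      exact Set.Finite.subset (Set.Finite.image _ ((Set.finite_Icc _ _).prod (Set.finite_Icc _ _))) hsub
    refine ⟨q.den, q.num, le_trans (Nat.le_succ M) hden, q.pos, ?_⟩
    have hdpos : (0:ℝ) < q.den := by exact_mod_cast q.pos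
    have : |(q.den:ℝ) * α - q.num| = q.den * |α - (q:ℝ)| := by
      have hnum : (q.den:ℝ) * (q:ℝ) = q.num := by
        rw [Rat.cast_def]; field_simp
      rw [← abs_of_pos hdpos, ← abs_mul, mul_sub, hnum, abs_of_pos hdpos]
    rw [this]
    calc (q.den:ℝ) * |α - (q:ℝ)| ≤ q.den * (1/(q.den:ℝ)^2) := by
          exact mul_le_mul_of_nonneg_left (le_of_lt hq) (le_of_lt hdpos)
    _ = 1 / q.den := by field_simp
  · rw [Irrational, not_not] at h
    obtain ⟨q₀, hq₀⟩ := h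
    refine ⟨(M+1) * q₀.den, ((M:ℤ)+1) * q₀.num, ?_, ?_, ?_⟩
    · calc M ≤ M + 1 := Nat.le_succ M
      _ ≤ (M+1) * q₀.den := Nat.le_mul_of_pos_right _ q₀.pos
    · exact Nat.one_le_iff_ne_zero.mpr (by positivity)
    · have hd : (q₀.den : ℝ) ≠ 0 := by exact_mod_cast q₀.pos.ne'
      have hz : ((((M+1) * q₀.den : ℕ)):ℝ) * α = ((((M:ℤ)+1) * q₀.num : ℤ) : ℝ) := by
        rw [← hq₀, Rat.cast_def]
        push_cast
        field_simp
      rw [hz, sub_self, abs_zero]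
      positivity

/-- The bilinear form `B_γ(f,g;s)(τ,n)`, dual to the estimate
`‖uv‖_{X_{per}^{s,−1/2}} ≲ ‖u‖_{Y_{γ,per}^{s−1/2,1/2}} ‖v‖_{X_{per}^{s,1/2}}`. -/
noncomputable def Bγ (γ s : ℝ) (f g : ℝ × ℤ → ℝ) (τ : ℝ) (n : ℤ) : ℝ≥0∞ :=
  ENNReal.ofReal (jb (n : ℝ) ^ s / jb (τ + (n : ℝ) ^ 2) ^ (1/2 : ℝ)) *
    ∑' n₁ : ℤ, ∫⁻ τ₁ : ℝ,
      ENNReal.ofReal (f (τ₁, n₁) * g (τ - τ₁, n - n₁) /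
        (jb (n₁ : ℝ) ^ (s - 1/2) * jb (τ₁ + γ * |(n₁ : ℝ)| * (n₁ : ℝ)) ^ (1/2 : ℝ)
          * jb ((n : ℝ) - (n₁ : ℝ)) ^ s
          * jb (τ - τ₁ + ((n : ℝ) - (n₁ : ℝ)) ^ 2) ^ (1/2 : ℝ)))

/-- For `γ ≠ 0`, `|γ| ≠ 1` and `s < 1/2`, the bilinear estimate for `B_γ` fails. -/
theorem periodic_bilinear_estimate_X_fails (γ s : ℝ) (hγ : γ ≠ 0) (hγ1 : |γ| ≠ 1)
    (hs : s < 1/2) :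
    ∀ C : ℝ, 0 < C → ∃ f g : ℝ × ℤ → ℝ,
      Measurable f ∧ Measurable g ∧ (∀ p, 0 ≤ f p) ∧ (∀ p, 0 ≤ g p) ∧
      l2RZ f ≠ ⊤ ∧ l2RZ g ≠ ⊤ ∧
      ENNReal.ofReal C * l2RZ f * l2RZ g <
        (∑' n : ℤ, ∫⁻ τ : ℝ, (Bγ γ s f g τ n) ^ 2) ^ (1/2 : ℝ) := by
  intro C hC
  -- γ is neither 1 nor -1
  have hγp1 : γ + 1 ≠ 0 := by
    intro h; exact hγ1 (by rw [show γ = -1 by linarith]; simp)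
  have hγm1 : γ - 1 ≠ 0 := by
    intro h; exact hγ1 (by rw [show γ = 1 by linarith]; simp)
  have hε : (0:ℝ) < 1/2 - s := by linarith
  set a : ℝ := |γ + 1| / 2 with ha_def
  set b : ℝ := |γ - 1| / 2 with hb_def
  have ha : 0 < a := by
    have := abs_pos.mpr hγp1; rw [ha_def]; linarith
  have hb : 0 < b := by
    have := abs_pos.mpr hγm1; rw [hb_def]; linarith
  set m1 : ℝ := min (a ^ s) ((a+2) ^ s) with hm1_def
  set m2 : ℝ := min (b ^ (-s)) ((b+2) ^ (-s)) with hm2_def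
  have hm1 : 0 < m1 := lt_min (Real.rpow_pos_of_pos ha _) (Real.rpow_pos_of_pos (by linarith) _)
  have hm2 : 0 < m2 := lt_min (Real.rpow_pos_of_pos hb _) (Real.rpow_pos_of_pos (by linarith) _)
  set K : ℝ := m1 * m2 with hK_def
  have hK : 0 < K := mul_pos hm1 hm2
  set T : ℝ := 48 * C / K with hT_def
  have hT : 0 < T := by positivity
  -- choose M with T < M ^ (1/2 - s)
  obtain ⟨M, hM⟩ := exists_nat_gt (max 1 (T ^ (1/(1/2-s))))
  have hMε : T < (M:ℝ) ^ ((1:ℝ)/2 - s) := by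
    have h1 : T ^ ((1:ℝ)/(1/2-s)) < (M:ℝ) := lt_of_le_of_lt (le_max_right _ _) hM
    have h0 : (0:ℝ) ≤ T ^ ((1:ℝ)/(1/2-s)) := Real.rpow_nonneg hT.le _
    calc T = (T ^ ((1:ℝ)/(1/2-s))) ^ ((1:ℝ)/2-s) := by
          rw [← Real.rpow_mul hT.le, one_div, inv_mul_cancel₀ hε.ne', Real.rpow_one]
    _ < (M:ℝ) ^ ((1:ℝ)/2-s) := Real.rpow_lt_rpow h0 h1 hε
  -- Dirichlet approximation
  obtain ⟨N, p, hMN, hN1, happ⟩ := exists_good_approx ((γ-1)/2) M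
  have hN0 : (0:ℝ) < N := by exact_mod_cast hN1
  have hNR : (1:ℝ) ≤ N := by exact_mod_cast hN1
  have happ2 : |(N:ℝ) * ((γ-1)/2) - p| ≤ 1 := by
    refine happ.trans ?_
    rw [div_le_one hN0]; exact hNR
  have habs : |(N:ℝ) * ((γ-1)/2)| = (N:ℝ) * b := by
    rw [abs_mul, abs_of_nonneg hN0.le, hb_def, abs_div]
    norm_num
  -- bounds on p
  have hp_lb : b * (N:ℝ) ≤ 1 + |(p:ℝ)| := by
    have h1 := abs_sub_abs_le_abs_sub ((N:ℝ)*((γ-1)/2)) (p:ℝ)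
    rw [habs] at h1
    linarith [happ2]
  have hp_ub : 1 + |(p:ℝ)| ≤ (b+2) * (N:ℝ) := by
    have h1 := abs_sub_abs_le_abs_sub (p:ℝ) ((N:ℝ)*((γ-1)/2))
    rw [abs_sub_comm, habs] at h1
    linarith [happ2]
  -- bounds on n₀ = N + p
  set n₀ : ℤ := (N:ℤ) + p with hn₀_def
  have hcast : ((n₀ : ℤ) : ℝ) = (N:ℝ) + (p:ℝ) := by rw [hn₀_def]; push_cast; ring
  have habs' : |(N:ℝ) * ((γ+1)/2)| = (N:ℝ) * a := by
    rw [abs_mul, abs_of_nonneg hN0.le, ha_def, abs_div]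
    norm_num
  have hn0app : |((N:ℝ) + (p:ℝ)) - (N:ℝ)*((γ+1)/2)| ≤ 1 := by
    have heq : (N:ℝ) + (p:ℝ) - (N:ℝ)*((γ+1)/2) = -((N:ℝ)*((γ-1)/2) - p) := by ring
    rw [heq, abs_neg]; exact happ2
  have hn0_lb : a * (N:ℝ) ≤ 1 + |(N:ℝ) + (p:ℝ)| := by
    have h1 := abs_sub_abs_le_abs_sub ((N:ℝ)*((γ+1)/2)) ((N:ℝ) + (p:ℝ))
    rw [abs_sub_comm, habs'] at h1
    linarith [hn0app]
  have hn0_ub : 1 + |(N:ℝ) + (p:ℝ)| ≤ (a+2) * (N:ℝ) := by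
    have h1 := abs_sub_abs_le_abs_sub ((N:ℝ) + (p:ℝ)) ((N:ℝ)*((γ+1)/2))
    rw [habs'] at h1
    linarith [hn0app]
  -- resonance bound
  have hθ : |((N:ℝ)+(p:ℝ))^2 - γ*(N:ℝ)^2 - (p:ℝ)^2| ≤ 2 := by
    have heq : ((N:ℝ)+(p:ℝ))^2 - γ*(N:ℝ)^2 - (p:ℝ)^2
        = (-(2*(N:ℝ))) * ((N:ℝ)*((γ-1)/2) - (p:ℝ)) := by ring
    rw [heq, abs_mul, abs_neg, abs_of_nonneg (by positivity : (0:ℝ) ≤ 2*(N:ℝ))]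
    calc 2*(N:ℝ) * |(N:ℝ)*((γ-1)/2) - (p:ℝ)| ≤ 2*(N:ℝ) * (1/(N:ℝ)) := by
          exact mul_le_mul_of_nonneg_left happ (by positivity)
    _ = 2 := by field_simp
  -- the functions
  set A : ℝ := -(γ*(N:ℝ)^2) with hA_def
  set Bc : ℝ := -((p:ℝ)^2) with hBc_def
  set f : ℝ × ℤ → ℝ := (Set.Icc A (A+1) ×ˢ ({((N:ℕ):ℤ)} : Set ℤ)).indicator (fun _ => (1:ℝ)) with hf_def
  set g : ℝ × ℤ → ℝ := (Set.Icc Bc (Bc+1) ×ˢ ({p} : Set ℤ)).indicator (fun _ => (1:ℝ)) with hg_def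
  have hl2f : l2RZ f = 1 := l2_ind A ((N:ℕ):ℤ)
  have hl2g : l2RZ g = 1 := l2_ind Bc p
  refine ⟨f, g, ?_, ?_, ?_, ?_, ?_, ?_, ?_⟩
  · exact measurable_const.indicator (measurableSet_Icc.prod (measurableSet_singleton _))
  · exact measurable_const.indicator (measurableSet_Icc.prod (measurableSet_singleton _))
  · exact fun q => Set.indicator_nonneg (fun _ _ => zero_le_one) q
  · exact fun q => Set.indicator_nonneg (fun _ _ => zero_le_one) q
  · rw [hl2f]; exact one_ne_top
  · rw [hl2g]; exact one_ne_top
  rw [hl2f, hl2g, mul_one, mul_one]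
  -- main estimate
  set E₁ : ℝ := (jb (N:ℝ) ^ (s - 1/2) * 2 * jb (p:ℝ) ^ s * 2)⁻¹ with hE₁_def
  have hE₁pos : 0 < E₁ := by
    rw [hE₁_def]
    have h1 := Real.rpow_pos_of_pos (jb_pos (N:ℝ)) (s - 1/2)
    have h2 := Real.rpow_pos_of_pos (jb_pos (p:ℝ)) s
    positivity
  set E₀ : ℝ := jb ((N:ℝ)+(p:ℝ)) ^ s / 3 * (E₁ * (1/2)) with hE₀_def
  have hE₀pos : 0 < E₀ := by
    rw [hE₀_def]
    have h1 := Real.rpow_pos_of_pos (jb_pos ((N:ℝ)+(p:ℝ))) s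
    positivity
  -- pointwise lower bound for Bγ on the window J
  have stepA : ∀ τ : ℝ, τ ∈ Set.Icc (A + Bc + 1) (A + Bc + 3/2) →
      ENNReal.ofReal E₀ ≤ Bγ γ s f g τ n₀ := by
    intro τ hτ
    obtain ⟨hτ1, hτ2⟩ := hτ
    rw [Bγ]
    simp only [hcast]
    -- outer factor bound
    have hX : jb (τ + ((N:ℝ)+(p:ℝ))^2) ^ ((1:ℝ)/2) ≤ 3 := by
      apply rpow_half_le (jb_pos _).le (by norm_num)
      have h1 : |τ + ((N:ℝ)+(p:ℝ))^2| ≤ 7/2 := by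
        have heq : τ + ((N:ℝ)+(p:ℝ))^2
            = (((N:ℝ)+(p:ℝ))^2 - γ*(N:ℝ)^2 - (p:ℝ)^2) + (τ - (A + Bc)) := by
          rw [hA_def, hBc_def]; ring
        rw [heq]
        have h2 : |τ - (A + Bc)| ≤ 3/2 := abs_le.mpr ⟨by linarith, by linarith⟩
        calc |(((N:ℝ)+(p:ℝ))^2 - γ*(N:ℝ)^2 - (p:ℝ)^2) + (τ - (A + Bc))|
            ≤ |((N:ℝ)+(p:ℝ))^2 - γ*(N:ℝ)^2 - (p:ℝ)^2| + |τ - (A + Bc)| := abs_add_le _ _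
        _ ≤ 7/2 := by linarith [hθ]
      rw [jb_def]; linarith [h1]
    have hW : ENNReal.ofReal (jb ((N:ℝ)+(p:ℝ)) ^ s / 3)
        ≤ ENNReal.ofReal (jb ((N:ℝ)+(p:ℝ)) ^ s / jb (τ + ((N:ℝ)+(p:ℝ))^2) ^ ((1:ℝ)/2)) := by
      apply ENNReal.ofReal_le_ofReal
      have hd : (0:ℝ) < jb (τ + ((N:ℝ)+(p:ℝ))^2) ^ ((1:ℝ)/2) :=
        Real.rpow_pos_of_pos (jb_pos _) _
      have hnum : (0:ℝ) < jb ((N:ℝ)+(p:ℝ)) ^ s := Real.rpow_pos_of_pos (jb_pos _) _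
      exact (div_le_div_iff_of_pos_left hnum (by norm_num) hd).mpr hX
    refine le_trans ?_ (mul_le_mul' hW (?_ : ENNReal.ofReal E₁ * ENNReal.ofReal (1/2) ≤ _))
    · apply le_of_eq
      rw [hE₀_def, ENNReal.ofReal_mul (by
          have := Real.rpow_pos_of_pos (jb_pos ((N:ℝ)+(p:ℝ))) s
          positivity), ENNReal.ofReal_mul hE₁pos.le]
    · -- lower bound for the sum over n₁ by the single term n₁ = N,
      -- and the τ₁-integral by the overlap interval
      refine le_trans ?_ (ENNReal.le_tsum ((N:ℕ):ℤ))
      refine le_trans ?_ (setLIntegral_le_lintegral (Set.Icc (τ - Bc - 1) (τ - Bc - 1/2)) _)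
      refine le_trans (le_of_eq ?_)
        (setLIntegral_mono' (f := fun _ => ENNReal.ofReal E₁) measurableSet_Icc ?_)
      · rw [setLIntegral_const, Real.volume_Icc,
          show τ - Bc - 1/2 - (τ - Bc - 1) = 1/2 by ring]
      · intro τ₁ hτ₁
        rw [Set.mem_Icc] at hτ₁
        obtain ⟨h1, h2⟩ := hτ₁
        have hfv : f (τ₁, ((N:ℕ):ℤ)) = 1 := by
          have hmem : ((τ₁ : ℝ), ((N:ℕ):ℤ)) ∈ Set.Icc A (A+1) ×ˢ ({((N:ℕ):ℤ)} : Set ℤ) :=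
            Set.mk_mem_prod (Set.mem_Icc.mpr ⟨by linarith, by linarith⟩) rfl
          rw [hf_def]
          exact Set.indicator_of_mem hmem _
        have hgv : g (τ - τ₁, n₀ - ((N:ℕ):ℤ)) = 1 := by
          have hmem : ((τ - τ₁ : ℝ), p) ∈ Set.Icc Bc (Bc+1) ×ˢ ({p} : Set ℤ) :=
            Set.mk_mem_prod (Set.mem_Icc.mpr ⟨by linarith, by linarith⟩) rfl
          rw [hg_def, show n₀ - ((N:ℕ):ℤ) = p from by rw [hn₀_def]; ring]
          exact Set.indicator_of_mem hmem _
        rw [hfv, hgv, one_mul]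
        simp only [Int.cast_natCast]
        rw [abs_of_nonneg hN0.le,
          show τ₁ + γ * (N:ℝ) * (N:ℝ) = τ₁ - A from by rw [hA_def]; ring,
          show (N:ℝ) + (p:ℝ) - (N:ℝ) = (p:ℝ) from by ring]
        rw [show τ - τ₁ + (p:ℝ)^2 = (τ - τ₁) - Bc from by rw [hBc_def]; ring]
        apply ENNReal.ofReal_le_ofReal
        have p1 : (0:ℝ) < jb (N:ℝ) ^ (s - 1/2) := Real.rpow_pos_of_pos (jb_pos _) _
        have p2 : (0:ℝ) < jb (p:ℝ) ^ s := Real.rpow_pos_of_pos (jb_pos _) _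
        have p3 : (0:ℝ) < jb (τ₁ - A) ^ ((1:ℝ)/2) := Real.rpow_pos_of_pos (jb_pos _) _
        have p4 : (0:ℝ) < jb ((τ - τ₁) - Bc) ^ ((1:ℝ)/2) := Real.rpow_pos_of_pos (jb_pos _) _
        have hb1 : jb (τ₁ - A) ^ ((1:ℝ)/2) ≤ 2 := jb_half_le_two (by linarith) (by linarith)
        have hb2 : jb ((τ - τ₁) - Bc) ^ ((1:ℝ)/2) ≤ 2 :=
          jb_half_le_two (by linarith) (by linarith)
        have hDpos : (0:ℝ) < jb (N:ℝ) ^ (s - 1/2) * jb (τ₁ - A) ^ ((1:ℝ)/2)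
            * jb (p:ℝ) ^ s * jb ((τ - τ₁) - Bc) ^ ((1:ℝ)/2) := by positivity
        have hDle : jb (N:ℝ) ^ (s - 1/2) * jb (τ₁ - A) ^ ((1:ℝ)/2)
            * jb (p:ℝ) ^ s * jb ((τ - τ₁) - Bc) ^ ((1:ℝ)/2)
            ≤ jb (N:ℝ) ^ (s - 1/2) * 2 * jb (p:ℝ) ^ s * 2 := by
          have s1 : jb (N:ℝ) ^ (s - 1/2) * jb (τ₁ - A) ^ ((1:ℝ)/2)
              ≤ jb (N:ℝ) ^ (s - 1/2) * 2 := mul_le_mul_of_nonneg_left hb1 p1.le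
          have s2 : jb (N:ℝ) ^ (s - 1/2) * jb (τ₁ - A) ^ ((1:ℝ)/2) * jb (p:ℝ) ^ s
              ≤ jb (N:ℝ) ^ (s - 1/2) * 2 * jb (p:ℝ) ^ s :=
            mul_le_mul_of_nonneg_right s1 p2.le
          calc jb (N:ℝ) ^ (s - 1/2) * jb (τ₁ - A) ^ ((1:ℝ)/2)
              * jb (p:ℝ) ^ s * jb ((τ - τ₁) - Bc) ^ ((1:ℝ)/2)
              ≤ jb (N:ℝ) ^ (s - 1/2) * 2 * jb (p:ℝ) ^ s * jb ((τ - τ₁) - Bc) ^ ((1:ℝ)/2) :=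
            mul_le_mul_of_nonneg_right s2 p4.le
          _ ≤ jb (N:ℝ) ^ (s - 1/2) * 2 * jb (p:ℝ) ^ s * 2 :=
            mul_le_mul_of_nonneg_left hb2 (by positivity)
        have := one_div_le_one_div_of_le hDpos hDle
        rw [hE₁_def]
        rw [← one_div]
        exact this
  -- total lower bound for the square norm
  have hsum_total : ENNReal.ofReal (E₀^2 * (1/2))
      ≤ ∑' n : ℤ, ∫⁻ τ : ℝ, (Bγ γ s f g τ n)^2 := by
    refine le_trans ?_ (ENNReal.le_tsum n₀)
    refine le_trans ?_ (setLIntegral_le_lintegral (Set.Icc (A + Bc + 1) (A + Bc + 3/2)) _)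
    refine le_trans (le_of_eq ?_)
      (setLIntegral_mono' (f := fun _ => ENNReal.ofReal E₀ ^ 2) measurableSet_Icc
        (fun τ hτ => pow_le_pow_left' (stepA τ hτ) 2))
    rw [setLIntegral_const, Real.volume_Icc,
      show A + Bc + 3/2 - (A + Bc + 1) = 1/2 by ring,
      ENNReal.ofReal_mul (by positivity), ENNReal.ofReal_pow hE₀pos.le]
  -- the quantitative gain
  have hjbN : (N:ℝ) ^ ((1:ℝ)/2 - s) ≤ jb (N:ℝ) ^ ((1:ℝ)/2 - s) := by
    apply Real.rpow_le_rpow hN0.le ?_ hε.le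
    rw [jb_def, abs_of_nonneg hN0.le]; linarith
  have h1 : m1 * (N:ℝ)^s ≤ jb ((N:ℝ)+(p:ℝ)) ^ s := by
    have hlow : a * (N:ℝ) ≤ jb ((N:ℝ)+(p:ℝ)) := by
      rw [jb_def]; linarith [hn0_lb]
    have hup : jb ((N:ℝ)+(p:ℝ)) ≤ (a+2) * (N:ℝ) := by
      rw [jb_def]; linarith [hn0_ub]
    have hmin := rpow_min_le (t := s) (mul_pos ha hN0) hlow hup
    rw [Real.mul_rpow ha.le hN0.le, Real.mul_rpow (by linarith : (0:ℝ) ≤ a+2) hN0.le] at hmin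
    refine le_trans (le_min ?_ ?_) hmin
    · exact mul_le_mul_of_nonneg_right (min_le_left _ _) (Real.rpow_nonneg hN0.le s)
    · exact mul_le_mul_of_nonneg_right (min_le_right _ _) (Real.rpow_nonneg hN0.le s)
  have h2 : m2 * (N:ℝ)^(-s) ≤ jb (p:ℝ) ^ (-s) := by
    have hlow : b * (N:ℝ) ≤ jb (p:ℝ) := by
      rw [jb_def]; linarith [hp_lb]
    have hup : jb (p:ℝ) ≤ (b+2) * (N:ℝ) := by
      rw [jb_def]; linarith [hp_ub]
    have hmin := rpow_min_le (t := -s) (mul_pos hb hN0) hlow hup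
    rw [Real.mul_rpow hb.le hN0.le, Real.mul_rpow (by linarith : (0:ℝ) ≤ b+2) hN0.le] at hmin
    refine le_trans (le_min ?_ ?_) hmin
    · exact mul_le_mul_of_nonneg_right (min_le_left _ _) (Real.rpow_nonneg hN0.le (-s))
    · exact mul_le_mul_of_nonneg_right (min_le_right _ _) (Real.rpow_nonneg hN0.le (-s))
  have hE₁eq : E₁ = jb (N:ℝ) ^ ((1:ℝ)/2 - s) * jb (p:ℝ) ^ (-s) / 4 := by
    rw [hE₁_def, show (1:ℝ)/2 - s = -(s - 1/2) by ring, Real.rpow_neg (jb_pos _).le,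
      Real.rpow_neg (jb_pos (p:ℝ)).le,
      show jb (N:ℝ) ^ (s - 1/2) * 2 * jb (p:ℝ) ^ s * 2
        = (jb (N:ℝ) ^ (s - 1/2) * jb (p:ℝ) ^ s) * 4 by ring,
      mul_inv, mul_inv]
    ring
  have hE₀big : K * (N:ℝ) ^ ((1:ℝ)/2 - s) / 24 ≤ E₀ := by
    rw [hE₀_def, hE₁eq]
    have hNs : (N:ℝ)^s * (N:ℝ)^(-s) = 1 := by
      rw [← Real.rpow_add hN0]; simp
    have heq : K * (N:ℝ) ^ ((1:ℝ)/2 - s) / 24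
        = (m1 * (N:ℝ)^s)/3 * (((N:ℝ)^((1:ℝ)/2-s) * (m2 * (N:ℝ)^(-s)))/4 * (1/2)) := by
      have expand : (m1 * (N:ℝ)^s)/3 * (((N:ℝ)^((1:ℝ)/2-s) * (m2 * (N:ℝ)^(-s)))/4 * (1/2))
          = m1*m2*((N:ℝ)^s*(N:ℝ)^(-s))*(N:ℝ)^((1:ℝ)/2-s)/24 := by ring
      rw [expand, hNs, hK_def]; ring
    rw [heq]
    have q1 : (0:ℝ) ≤ m1 * (N:ℝ)^s := (mul_pos hm1 (Real.rpow_pos_of_pos hN0 s)).le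
    have q2 : (0:ℝ) ≤ (N:ℝ)^((1:ℝ)/2-s) := (Real.rpow_pos_of_pos hN0 _).le
    have q3 : (0:ℝ) ≤ m2 * (N:ℝ)^(-s) := (mul_pos hm2 (Real.rpow_pos_of_pos hN0 _)).le
    have i1 : ((N:ℝ)^((1:ℝ)/2-s) * (m2 * (N:ℝ)^(-s)))
        ≤ (jb (N:ℝ) ^ ((1:ℝ)/2 - s) * jb (p:ℝ) ^ (-s)) :=
      mul_le_mul hjbN h2 q3 (Real.rpow_nonneg (jb_pos _).le _)
    have i2 : ((N:ℝ)^((1:ℝ)/2-s) * (m2 * (N:ℝ)^(-s)))/4 * (1/2)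
        ≤ (jb (N:ℝ) ^ ((1:ℝ)/2 - s) * jb (p:ℝ) ^ (-s))/4 * (1/2) := by linarith
    apply mul_le_mul (by linarith [h1]) i2 (by linarith [mul_nonneg q2 q3]) ?_
    have := Real.rpow_pos_of_pos (jb_pos ((N:ℝ)+(p:ℝ))) s
    positivity
  have hNε : T < (N:ℝ) ^ ((1:ℝ)/2 - s) := by
    refine lt_of_lt_of_le hMε (Real.rpow_le_rpow (by positivity) ?_ hε.le)
    exact_mod_cast hMN
  have hCE : C < E₀ / 2 := by
    have h48 : 48 * C < K * (N:ℝ) ^ ((1:ℝ)/2 - s) := by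
      rw [hT_def] at hNε
      have h := (div_lt_iff₀ hK).mp hNε
      linarith [h]
    linarith [hE₀big, h48]
  have hreal : C < (E₀^2 * (1/2)) ^ ((1:ℝ)/2) := by
    have hhalf : E₀/2 ≤ (E₀^2 * (1/2)) ^ ((1:ℝ)/2) := by
      rw [← Real.sqrt_eq_rpow]
      have h4 : (E₀/2)^2 ≤ E₀^2 * (1/2) := by linarith [sq_nonneg E₀]
      calc E₀/2 = Real.sqrt ((E₀/2)^2) := (Real.sqrt_sq (by positivity)).symm
      _ ≤ _ := Real.sqrt_le_sqrt h4
    linarith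
  calc ENNReal.ofReal C
      < ENNReal.ofReal ((E₀^2 * (1/2)) ^ ((1:ℝ)/2)) := by
        rw [ENNReal.ofReal_lt_ofReal_iff (by positivity)]
        exact hreal
  _ = (ENNReal.ofReal (E₀^2 * (1/2))) ^ ((1:ℝ)/2) :=
      (ENNReal.ofReal_rpow_of_pos (by positivity)).symm
  _ ≤ _ := ENNReal.rpow_le_rpow hsum_total (by norm_num)
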